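/- Let ψ_2 be a real number and set ψ_3 = ψ_2 and ψ_1 = −2ψ_2 (so that ψ_1 + ψ_2 + ψ_3 = 0). Then the Cayley-transformed quartic R̃_1 factors as a perfect square: for all c, R̃_1(c) = −(6ψ_2²·c² − 6ψ_2·c − 2ψ_2² + 1)². -/
import Mathlib


/-- The Cayley-transformed quartic `R̃₁` with parameters `(ψ₁, ψ₂, ψ₃)`
evaluated at `c`. -/
noncomputable def Rtilde (p1 p2 p3 c : ℝ) : ℝ :=
  -(9 * p1 ^ 2 * p2 * p3) * c ^ 4
    + (-(4 * p1 * (2 * p2 + p3) * (p2 + 2 * p3))) * c ^ 3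
    + (6 * p1 ^ 2 * (p2 * p3 - 2)) * c ^ 2
    + (6 * p1 * (2 * p2 * p3 - 1)) * c
    + (-(p1 ^ 2 * p2 * p3 - 4 * p2 * p3 + 1))

/-- In the degenerate case `ψ₃ = ψ₂`, `ψ₁ = −2ψ₂`, the
Cayley-transformed quartic `R̃₁` factors as a perfect square:
`R̃₁(c) = −(6ψ₂²c² − 6ψ₂c − 2ψ₂² + 1)²`. -/
theorem degenerate_case_psi2_eq_psi3 (ψ2 : ℝ) :
    ∀ c : ℝ,
      Rtilde (-2 * ψ2) ψ2 ψ2 c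
        = -(6 * ψ2 ^ 2 * c ^ 2 - 6 * ψ2 * c - 2 * ψ2 ^ 2 + 1) ^ 2 := by
  intro c; unfold Rtilde; ring
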